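/- Suppose p₁,…,p₂ₙ are nonzero vectors in ℍ^{n,1} whose Gram matrix (gᵢⱼ) = (⟨pᵢ, pⱼ⟩) is normalized, meaning g₁₂ = g₁₃ = g₁₄ = 1 and |g₂₃| = 1, g₃ⱼ = 1 for 5 ≤ j ≤ n+2, and g₁ₖ = 1 for n+3 ≤ k ≤ 2n. If the rescaled lifts p₁λ₁, …, p₂ₙλ₂ₙ (λᵢ ∈ ℍ \ {0}) also have a normalized Gram matrix, then λ₁ = λ₂ = ⋯ = λ₂ₙ and |λ₁| = 1. -/

import Mathlib

open Matrix

/-- The standard Hermitian form of signature `(n,1)` on `ℍ^{n+1}`: ones at positions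
`(1, n+1)` and `(n+1, 1)` and an identity block in the middle. -/
noncomputable def stdH (n : ℕ) : Matrix (Fin (n + 1)) (Fin (n + 1)) (Quaternion ℝ) :=
  fun i j =>
    if (i.val = 0 ∧ j.val = n) ∨ (i.val = n ∧ j.val = 0) ∨
        (i = j ∧ i.val ≠ 0 ∧ i.val ≠ n) then 1 else 0

/-- The quaternionic Hermitian pairing `⟨z, w⟩ = w* H z`. -/
noncomputable def qherm {n : ℕ} (H : Matrix (Fin n) (Fin n) (Quaternion ℝ))
    (z w : Fin n → Quaternion ℝ) : Quaternion ℝ :=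
  dotProduct (star w) (H.mulVec z)

/-- The normalization conditions on the Gram matrix `gᵢⱼ = ⟨pᵢ,pⱼ⟩` of the
(1-indexed) tuple `p₁,…,p₂ₙ`: `g₁₂ = g₁₃ = g₁₄ = 1`, `|g₂₃| = 1`, `g₃ⱼ = 1` for
`5 ≤ j ≤ n+2`, and `g₁ₖ = 1` for `n+3 ≤ k ≤ 2n`. -/
def NormalizedGram (n : ℕ) (p : ℕ → Fin (n + 1) → Quaternion ℝ) : Prop :=
  qherm (stdH n) (p 1) (p 2) = 1 ∧ qherm (stdH n) (p 1) (p 3) = 1 ∧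
  qherm (stdH n) (p 1) (p 4) = 1 ∧ ‖qherm (stdH n) (p 2) (p 3)‖ = 1 ∧
  (∀ j : ℕ, 5 ≤ j → j ≤ n + 2 → qherm (stdH n) (p 3) (p j) = 1) ∧
  (∀ k : ℕ, n + 3 ≤ k → k ≤ 2 * n → qherm (stdH n) (p 1) (p k) = 1)

/-! Rescaling turns `gᵢⱼ` into `λ̄ⱼ gᵢⱼ λᵢ`, so every entry normalized to `1` on both sides gives
`λ̄ⱼ λᵢ = 1`. From `g₁₂ = g₁₃ = 1` we get `λ̄₂ = λ₁⁻¹ = λ̄₃`, hence `λ₂ = λ₃`, and then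
`|g₂₃| = 1` on both sides forces `|λ₂| = 1`, so `|λ₁| = 1`. A unit quaternion satisfies
`λ̄₁ λ₁ = 1`, so each relation `λ̄ⱼ λ₁ = 1` (directly, or via `λ₃ = λ₁`) yields `λⱼ = λ₁`. -/

open Quaternion

lemma qherm_mul_right {n : ℕ} (H : Matrix (Fin n) (Fin n) (Quaternion ℝ))
    (z w : Fin n → Quaternion ℝ) (a b : Quaternion ℝ) :
    qherm H (fun k => z k * a) (fun k => w k * b) = star b * qherm H z w * a := by
  simp only [qherm, dotProduct, Matrix.mulVec, Pi.star_apply, StarMul.star_mul,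
    Finset.mul_sum, Finset.sum_mul, mul_assoc]

lemma star_mul_eq_one_of_qherm_eq_one {n : ℕ} {H : Matrix (Fin n) (Fin n) (Quaternion ℝ)}
    {z w : Fin n → Quaternion ℝ} {a b : Quaternion ℝ} (h : qherm H z w = 1)
    (h' : qherm H (fun k => z k * a) (fun k => w k * b) = 1) : star b * a = 1 := by
  rwa [qherm_mul_right, h, mul_one] at h'

lemma star_mul_eq_one_unique {R : Type*} [DivisionRing R] [StarRing R] {a b c : R}
    (hb : star b * a = 1) (hc : star c * a = 1) : b = c :=
  star_injective <| mul_right_cancel₀ (right_ne_zero_of_mul_eq_one hb) (hb.trans hc.symm)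

lemma Quaternion.star_mul_self_eq_one {a : Quaternion ℝ} (ha : ‖a‖ = 1) : star a * a = 1 := by
  rw [star_mul_self, normSq_eq_norm_mul_self, ha, mul_one, coe_one]

lemma Quaternion.eq_of_star_mul_eq_one {a b : Quaternion ℝ} (ha : ‖a‖ = 1)
    (h : star b * a = 1) : b = a :=
  star_mul_eq_one_unique h (star_mul_self_eq_one ha)

lemma Quaternion.norm_eq_one_of_star_mul_eq_one {a b c g : Quaternion ℝ}
    (hb : star b * a = 1) (hc : star c * a = 1) (hg : ‖g‖ = 1)
    (h : ‖star c * g * b‖ = 1) : ‖a‖ = 1 := by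
  have hbc : b = c := star_mul_eq_one_unique hb hc
  have hb1 : ‖b‖ = 1 := by
    rw [norm_mul, norm_mul, norm_star, hg, mul_one, ← hbc] at h
    nlinarith [norm_nonneg b]
  simpa [hb1] using congrArg norm hb

theorem normalized_gram_rescaling_general (n : ℕ)
    (p : ℕ → Fin (n + 1) → Quaternion ℝ)
    (lam : ℕ → Quaternion ℝ)
    (hG : NormalizedGram n p)
    (hG' : NormalizedGram n (fun i => fun j => p i j * lam i)) :
    (∀ i j : ℕ, 1 ≤ i → i ≤ 2 * n → 1 ≤ j → j ≤ 2 * n → lam i = lam j) ∧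
      ‖lam 1‖ = 1 := by
  obtain ⟨g12, g13, g14, g23, g3j, g1k⟩ := hG
  obtain ⟨h12, h13, h14, h23, h3j, h1k⟩ := hG'
  have e12 := star_mul_eq_one_of_qherm_eq_one g12 h12
  have e13 := star_mul_eq_one_of_qherm_eq_one g13 h13
  rw [qherm_mul_right] at h23
  have hnorm : ‖lam 1‖ = 1 := norm_eq_one_of_star_mul_eq_one e12 e13 g23 h23
  have hlam3 : lam 3 = lam 1 := Quaternion.eq_of_star_mul_eq_one hnorm e13
  have hlam : ∀ i, 1 ≤ i → i ≤ 2 * n → lam i = lam 1 := by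
    intro i hi1 hi2
    refine Quaternion.eq_of_star_mul_eq_one hnorm ?_
    rcases Nat.lt_or_ge i 5 with hi5 | hi5
    · interval_cases i
      exacts [star_mul_self_eq_one hnorm, e12, e13, star_mul_eq_one_of_qherm_eq_one g14 h14]
    rcases le_or_gt i (n + 2) with hin | hin
    · simpa [hlam3] using star_mul_eq_one_of_qherm_eq_one (g3j i hi5 hin) (h3j i hi5 hin)
    · exact star_mul_eq_one_of_qherm_eq_one (g1k i (by omega) hi2) (h1k i (by omega) hi2)
  exact ⟨fun i j hi1 hi2 hj1 hj2 => (hlam i hi1 hi2).trans (hlam j hj1 hj2).symm, hnorm⟩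

/-- if the Gram matrices of `p₁,…,p₂ₙ` and of the rescaled lifts
`p₁λ₁,…,p₂ₙλ₂ₙ` are both normalized, then all the `λᵢ` are equal and `|λ₁| = 1`. -/
theorem normalized_gram_rescaling (n : ℕ) (hn : 3 ≤ n)
    (p : ℕ → Fin (n + 1) → Quaternion ℝ)
    (hp : ∀ i : ℕ, 1 ≤ i → i ≤ 2 * n → p i ≠ 0)
    (lam : ℕ → Quaternion ℝ) (hlam : ∀ i : ℕ, 1 ≤ i → i ≤ 2 * n → lam i ≠ 0)
    (hG : NormalizedGram n p)
    (hG' : NormalizedGram n (fun i => fun j => p i j * lam i)) :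
    (∀ i j : ℕ, 1 ≤ i → i ≤ 2 * n → 1 ≤ j → j ≤ 2 * n → lam i = lam j) ∧
      ‖lam 1‖ = 1 :=
  normalized_gram_rescaling_general n p lam hG hG'
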